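/- For a partition N = U₁ ⊔ U₂ ⊔ ... ⊔ U_k and w the uniform distribution over permutations respecting the block ordering (all of U₁ before U₂, etc., uniform within blocks), the asymmetric Shapley values of block U_m sum to v(U₁ ∪ ... ∪ U_m) - v(U₁ ∪ ... ∪ U_{m-1}). -/
import Mathlib


open Finset

/-- The set of players preceding `i` under ordering `π`. -/
def predSet {n : ℕ} (π : Equiv.Perm (Fin n)) (i : Fin n) : Finset (Fin n) :=
  Finset.univ.filter fun j => π j < π i

/-- The Shapley value of player `i` for value function `v`. -/
noncomputable def shapley {n : ℕ} (v : Finset (Fin n) → ℝ) (i : Fin n) : ℝ :=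
  (1 / (Nat.factorial n : ℝ)) *
    ∑ π : Equiv.Perm (Fin n), (v (insert i (predSet π i)) - v (predSet π i))

/-- The asymmetric Shapley value of player `i` with weights `w` over permutations. -/
noncomputable def asv {n : ℕ} (w : Equiv.Perm (Fin n) → ℝ)
    (v : Finset (Fin n) → ℝ) (i : Fin n) : ℝ :=
  ∑ π : Equiv.Perm (Fin n), w π * (v (insert i (predSet π i)) - v (predSet π i))

/-- A finset of naturals that is downward closed equals an initial segment. -/
lemma lower_nat_mem (S : Finset ℕ) (h : ∀ x ∈ S, ∀ y, y ≤ x → y ∈ S) (x : ℕ) :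
    x ∈ S ↔ x < S.card := by
  constructor
  · intro hx
    have hsub : Finset.range (x + 1) ⊆ S := by
      intro y hy
      exact h x hx y (by simpa [Nat.lt_succ_iff] using Finset.mem_range.mp hy)
    have := Finset.card_le_card hsub
    simp only [Finset.card_range] at this
    omega
  · intro hx
    by_contra hxS
    have hsub : S ⊆ Finset.range x := by
      intro y hy
      simp only [Finset.mem_range]
      by_contra hge
      push_neg at hge
      exact hxS (h y hy x hge)
    have := Finset.card_le_card hsub
    simp only [Finset.card_range] at this
    omega

lemma block_marginal_sum (n k : ℕ) (v : Finset (Fin n) → ℝ)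
    (U : Fin k → Finset (Fin n))
    (hdisj : ∀ a b : Fin k, a ≠ b → Disjoint (U a) (U b))
    (hunion : Finset.univ.biUnion U = (Finset.univ : Finset (Fin n)))
    (π : Equiv.Perm (Fin n))
    (hord : ∀ a b : Fin k, a < b → ∀ i ∈ U a, ∀ j ∈ U b, π i < π j)
    (m : Fin k) :
    ∑ i ∈ U m, (v (insert i (predSet π i)) - v (predSet π i))
      = v ((Finset.univ.filter fun a => a ≤ m).biUnion U)
        - v ((Finset.univ.filter fun a => a < m).biUnion U) := by
  classical
  -- every player lies in some block
  have hblk : ∀ j : Fin n, ∃ a, j ∈ U a := by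
    intro j
    have : j ∈ Finset.univ.biUnion U := by rw [hunion]; exact Finset.mem_univ j
    simpa using this
  -- key: a downward-closed union of blocks is an initial segment under π
  have key : ∀ (p : Fin k → Prop) [DecidablePred p], (∀ a b : Fin k, a ≤ b → p b → p a) →
      ∀ j : Fin n, (j ∈ (Finset.univ.filter fun a => p a).biUnion U ↔
        (π j : ℕ) < ((Finset.univ.filter fun a => p a).biUnion U).card) := by
    intro p _ hp j
    set B := (Finset.univ.filter fun a => p a).biUnion U with hB
    have hmemB : ∀ x : Fin n, x ∈ B ↔ ∃ a, p a ∧ x ∈ U a := by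
      intro x
      simp [hB, Finset.mem_biUnion]
    set S := B.image (fun x => ((π x : Fin n) : ℕ)) with hS
    have hinj : Set.InjOn (fun x : Fin n => ((π x : Fin n) : ℕ)) B := by
      intro x _ y _ hxy
      exact π.injective (Fin.val_injective hxy)
    have hcardS : S.card = B.card := Finset.card_image_of_injOn hinj
    have hlow : ∀ x ∈ S, ∀ y, y ≤ x → y ∈ S := by
      intro x hx y hy
      obtain ⟨i, hiB, hix⟩ := Finset.mem_image.mp hx
      have hyn : y < n := by
        have : x < n := hix ▸ (π i).isLt
        omega
      set j' := π.symm ⟨y, hyn⟩ with hj'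
      have hπj' : ((π j' : Fin n) : ℕ) = y := by simp [hj']
      obtain ⟨b, hb⟩ := hblk j'
      obtain ⟨a, hpa, hia⟩ := (hmemB i).mp hiB
      have hj'B : j' ∈ B := by
        rw [hmemB]
        refine ⟨b, ?_, hb⟩
        by_contra hpb
        have hab : a < b := by
          rcases lt_trichotomy a b with h | h | h
          · exact h
          · exact absurd (h ▸ hpa) hpb
          · exact absurd (hp b a h.le hpa) hpb
        have := hord a b hab i hia j' hb
        have : (π i : ℕ) < (π j' : ℕ) := this
        omega
      exact Finset.mem_image.mpr ⟨j', hj'B, by omega⟩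
    have hmain := lower_nat_mem S hlow (π j : ℕ)
    rw [hcardS] at hmain
    rw [← hmain]
    constructor
    · intro hj; exact Finset.mem_image.mpr ⟨j, hj, rfl⟩
    · intro hj
      obtain ⟨i, hiB, hix⟩ := Finset.mem_image.mp hj
      have : i = j := π.injective (Fin.val_injective hix)
      exact this ▸ hiB
  set B := (Finset.univ.filter fun a => a ≤ m).biUnion U with hBdef
  set B' := (Finset.univ.filter fun a => a < m).biUnion U with hB'def
  have hkeyB := key (fun a => a ≤ m) (fun a b hab hb => hab.trans hb)
  have hkeyB' := key (fun a => a < m) (fun a b hab hb => lt_of_le_of_lt hab hb)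
  set c := B'.card with hc
  set d := B.card with hd
  set G : ℕ → ℝ := fun t => v (Finset.univ.filter fun j => ((π j : Fin n) : ℕ) < t) with hG
  -- rewrite terms through G
  have hpred : ∀ i : Fin n, predSet π i = Finset.univ.filter fun j => ((π j : Fin n) : ℕ) < (π i : ℕ) := by
    intro i
    ext j
    simp only [predSet, Finset.mem_filter, Finset.mem_univ, true_and, Fin.lt_def]
  have hins : ∀ i : Fin n, insert i (predSet π i)
      = Finset.univ.filter fun j => ((π j : Fin n) : ℕ) < (π i : ℕ) + 1 := by
    intro i
    ext j
    simp only [Finset.mem_insert, hpred, Finset.mem_filter, Finset.mem_univ, true_and]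
    constructor
    · rintro (rfl | h) <;> omega
    · intro h
      rcases Nat.lt_or_ge (π j : ℕ) (π i : ℕ) with h' | h'
      · exact Or.inr h'
      · left
        have : (π j : ℕ) = (π i : ℕ) := by omega
        exact π.injective (Fin.val_injective this)
  -- membership in U m characterized by π-values
  have hUm : ∀ i : Fin n, i ∈ U m ↔ (c ≤ (π i : ℕ) ∧ (π i : ℕ) < d) := by
    intro i
    constructor
    · intro hi
      constructor
      · by_contra hlt
        push_neg at hlt
        have : i ∈ B' := (hkeyB' i).mpr hlt
        obtain ⟨a, ha, hia⟩ := by simpa [hB'def, Finset.mem_biUnion] using this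
        exact absurd hia (Finset.disjoint_left.mp (hdisj m a (ne_of_gt ha)) hi)
      · refine (hkeyB i).mp ?_
        simp only [hBdef, Finset.mem_biUnion]
        exact ⟨m, by simp, hi⟩
    · rintro ⟨h1, h2⟩
      have hiB : i ∈ B := (hkeyB i).mpr h2
      have hiB' : i ∉ B' := fun h => by have := (hkeyB' i).mp h; omega
      obtain ⟨a, ha, hia⟩ := by simpa [hBdef, Finset.mem_biUnion] using hiB
      rcases lt_or_eq_of_le ha with h | h
      · exact absurd (by simp [hB'def, Finset.mem_biUnion]; exact ⟨a, h, hia⟩) hiB'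
      · exact h ▸ hia
  -- image of U m under π-values is Ico c d
  have himg : (U m).image (fun i => ((π i : Fin n) : ℕ)) = Finset.Ico c d := by
    ext t
    simp only [Finset.mem_image, Finset.mem_Ico]
    constructor
    · rintro ⟨i, hi, rfl⟩
      exact (hUm i).mp hi
    · rintro ⟨h1, h2⟩
      have htn : t < n := by
        have : d ≤ n := by
          have := Finset.card_le_card (Finset.subset_univ B)
          simpa using this
        omega
      refine ⟨π.symm ⟨t, htn⟩, ?_, by simp⟩
      rw [hUm]
      simp
      omega
  have hstep : ∑ i ∈ U m, (v (insert i (predSet π i)) - v (predSet π i))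
      = ∑ t ∈ Finset.Ico c d, (G (t + 1) - G t) := by
    rw [← himg, Finset.sum_image (fun x hx y hy hxy => π.injective (Fin.val_injective hxy))]
    refine Finset.sum_congr rfl fun i _ => ?_
    rw [hins, hpred]
  rw [hstep]
  have hcd : c ≤ d := Finset.card_le_card (by
    intro x hx
    simp only [hB'def, Finset.mem_biUnion, Finset.mem_filter, Finset.mem_univ, true_and] at hx
    obtain ⟨a, ha, hxa⟩ := hx
    simp only [hBdef, Finset.mem_biUnion, Finset.mem_filter, Finset.mem_univ, true_and]
    exact ⟨a, ha.le, hxa⟩)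
  have htel : ∑ t ∈ Finset.Ico c d, (G (t + 1) - G t) = G d - G c := by
    rw [Finset.sum_Ico_eq_sub _ hcd, Finset.sum_range_sub, Finset.sum_range_sub]
    ring
  rw [htel]
  have hGd : G d = v B := by
    simp only [hG]
    congr 1
    ext j
    simp only [Finset.mem_filter, Finset.mem_univ, true_and]
    exact (hkeyB j).symm
  have hGc : G c = v B' := by
    simp only [hG]
    congr 1
    ext j
    simp only [Finset.mem_filter, Finset.mem_univ, true_and]
    exact (hkeyB' j).symm
  rw [hGd, hGc]

theorem asv_block_partition (n k : ℕ) (v : Finset (Fin n) → ℝ)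
    (U : Fin k → Finset (Fin n))
    (hdisj : ∀ a b : Fin k, a ≠ b → Disjoint (U a) (U b))
    (hunion : Finset.univ.biUnion U = (Finset.univ : Finset (Fin n)))
    (w : Equiv.Perm (Fin n) → ℝ) (hw0 : ∀ π, 0 ≤ w π)
    (hw1 : ∑ π : Equiv.Perm (Fin n), w π = 1)
    (hsupp : ∀ π : Equiv.Perm (Fin n), w π ≠ 0 →
      ∀ a b : Fin k, a < b → ∀ i ∈ U a, ∀ j ∈ U b, π i < π j)
    (hconst : ∀ π π' : Equiv.Perm (Fin n),
      (∀ a b : Fin k, a < b → ∀ i ∈ U a, ∀ j ∈ U b, π i < π j) →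
      (∀ a b : Fin k, a < b → ∀ i ∈ U a, ∀ j ∈ U b, π' i < π' j) →
      w π = w π')
    (m : Fin k) :
    ∑ i ∈ U m, asv w v i
      = v ((Finset.univ.filter fun a => a ≤ m).biUnion U)
        - v ((Finset.univ.filter fun a => a < m).biUnion U) := by
  classical
  set C := v ((Finset.univ.filter fun a => a ≤ m).biUnion U)
    - v ((Finset.univ.filter fun a => a < m).biUnion U) with hC
  have : ∑ i ∈ U m, asv w v i
      = ∑ π : Equiv.Perm (Fin n), w π * ∑ i ∈ U m,
          (v (insert i (predSet π i)) - v (predSet π i)) := by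
    simp only [asv]
    rw [Finset.sum_comm]
    exact Finset.sum_congr rfl fun π _ => (Finset.mul_sum _ _ _).symm
  rw [this]
  have : ∀ π : Equiv.Perm (Fin n), w π * ∑ i ∈ U m,
      (v (insert i (predSet π i)) - v (predSet π i)) = w π * C := by
    intro π
    by_cases hwz : w π = 0
    · simp [hwz]
    · rw [block_marginal_sum n k v U hdisj hunion π (hsupp π hwz) m, hC]
  rw [Finset.sum_congr rfl fun π _ => this π, ← Finset.sum_mul, hw1, one_mul]
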